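/- Let H be a bounded Hankel operator on H² and u = H𝟙. If s > 0 and u is orthogonal to the Schmidt subspace E_H(s) = {f ∈ H² : H(Hf) = s²·f}, then 𝟙 is orthogonal to E_H(s). -/

import Mathlib

open MeasureTheory Complex Filter

noncomputable section

namespace HankelSchmidt

instance fact_two_pi_pos : Fact (0 < 2 * Real.pi) := ⟨Real.two_pi_pos⟩

/-- The circle `𝕋`, realized as `ℝ / 2πℤ`. -/
abbrev Tc : Type := AddCircle (2 * Real.pi)

/-- Normalized arc-length (Haar) measure on the circle. -/
abbrev muc : Measure Tc := AddCircle.haarAddCircle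

/-- The space `L²(𝕋)`. -/
abbrev Ltwo := Lp ℂ 2 muc

/-- The Hardy space `H²`: the subspace of `L²(𝕋)` of functions whose Fourier coefficients
of negative index vanish. -/
def Hardy : Submodule ℂ Ltwo where
  carrier := {f | ∀ n : ℤ, n < 0 → fourierBasis.repr f n = 0}
  add_mem' := by
    intro a b ha hb n hn
    simp [map_add, lp.coeFn_add, ha n hn, hb n hn]
  zero_mem' := by
    intro n hn
    simp
  smul_mem' := by
    intro c a ha n hn
    simp [_root_.map_smul, lp.coeFn_smul, ha n hn]

theorem hardy_isClosed : IsClosed (Hardy : Set Ltwo) := by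
  have hset : (Hardy : Set Ltwo) =
      ⋂ (n : ℤ) (_ : n < 0), {f : Ltwo | fourierBasis.repr f n = 0} := by
    ext f
    simp only [Set.mem_iInter, Set.mem_setOf_eq]
    rfl
  rw [hset]
  refine isClosed_iInter fun n => isClosed_iInter fun hn => ?_
  have hcont : Continuous fun f : Ltwo => fourierBasis.repr f n := by
    have h1 : Continuous fun g : lp (fun _ : ℤ => ℂ) 2 => g n :=
      (continuous_apply n).comp lp.uniformContinuous_coe.continuous
    exact h1.comp fourierBasis.repr.continuous
  exact isClosed_eq hcont continuous_const

instance : CompleteSpace (Hardy : Submodule ℂ Ltwo) := hardy_isClosed.completeSpace_coe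

/-- The Hardy space as a type. -/
abbrev Hd := (Hardy : Submodule ℂ Ltwo)

/-- The orthogonal projection `P : L²(𝕋) → H²`. -/
def P2 : Ltwo → Hd := fun f => Submodule.orthogonalProjectionOnto Hardy f

/-- The orthogonal projection `P`, viewed as a map `L²(𝕋) → L²(𝕋)` with range `H²`. -/
def PL : Ltwo → Ltwo := fun f => ((P2 f : Hd) : Ltwo)

theorem fourierCoeff_congr_ae {f g : Tc → ℂ} (h : f =ᵐ[muc] g) (n : ℤ) :
    fourierCoeff f n = fourierCoeff g n :=
  integral_congr_ae (h.mono fun x hx => by dsimp only; rw [hx])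

theorem mem_Hardy_iff {f : Ltwo} :
    f ∈ Hardy ↔ ∀ n : ℤ, n < 0 → fourierCoeff (f : Tc → ℂ) n = 0 := by
  constructor
  · intro hf n hn; rw [← fourierBasis_repr]; exact hf n hn
  · intro hf n hn; rw [fourierBasis_repr]; exact hf n hn

/-- Pointwise multiplication by a bounded measurable function preserves `L²`. -/
theorem memLp_mul_of_bounded {g : Tc → ℂ} (hg : AEStronglyMeasurable g muc) {C : ℝ}
    (hb : ∀ᵐ x ∂muc, ‖g x‖ ≤ C) (f : Ltwo) :
    MemLp (fun x => g x * (f : Tc → ℂ) x) 2 muc := by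
  refine MemLp.of_le_mul (c := C) (Lp.memLp f) (hg.mul (Lp.aestronglyMeasurable f)) ?_
  filter_upwards [hb] with x hx
  rw [norm_mul]
  exact mul_le_mul_of_nonneg_right hx (norm_nonneg _)

theorem fourier_abs (n : ℤ) (x : Tc) : ‖fourier n x‖ = 1 := by
  rw [fourier_apply]; exact Circle.norm_coe _

theorem fourier_norm_one (n : ℤ) (x : Tc) : ‖fourier n x‖ ≤ 1 :=
  le_of_eq (fourier_abs n x)

/-- Multiplication of an `L²` function by the monomial `z^n`. -/
def mulF (n : ℤ) (f : Ltwo) : Ltwo :=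
  (memLp_mul_of_bounded ((map_continuous (fourier n)).aestronglyMeasurable)
    (Eventually.of_forall (fourier_norm_one n)) f).toLp _

theorem mulF_coe (n : ℤ) (f : Ltwo) :
    (mulF n f : Tc → ℂ) =ᵐ[muc] fun x => fourier n x * (f : Tc → ℂ) x :=
  MemLp.coeFn_toLp _

theorem fourierCoeff_fourier_mul (f : Tc → ℂ) (m n : ℤ) :
    fourierCoeff (fun x => fourier m x * f x) n = fourierCoeff f (n - m) := by
  unfold fourierCoeff
  refine integral_congr_ae (Eventually.of_forall fun x => ?_)
  have h : @fourier (2 * Real.pi) (-(n - m)) x = fourier (-n) x * fourier m x := by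
    rw [show -(n - m) = -n + m by ring, fourier_add]
  simp only [smul_eq_mul, h]
  ring

/-- The shift operator `S : H² → H²`, `(Sf)(z) = z·f(z)`. -/
def Sop (f : Hd) : Hd :=
  ⟨mulF 1 (f : Ltwo), by
    rw [mem_Hardy_iff]
    intro n hn
    rw [fourierCoeff_congr_ae (mulF_coe 1 (f : Ltwo)) n, fourierCoeff_fourier_mul]
    exact (mem_Hardy_iff.mp f.2) (n - 1) (by omega)⟩

/-- The adjoint shift `S* : H² → H²`, `S*f = P(z̄·f)`. -/
def SstarOp (f : Hd) : Hd := P2 (mulF (-1) (f : Ltwo))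

/-- The constant function `𝟙 ∈ H²`. -/
def oneH : Hd :=
  ⟨fourierLp 2 0, by
    rw [mem_Hardy_iff]
    intro n hn
    rw [← fourierBasis_repr]
    have h1 : (fourierLp (T := 2 * Real.pi) 2 0) = fourierBasis 0 := by
      rw [coe_fourierBasis]
    rw [h1, HilbertBasis.repr_self, lp.single_apply]
    first
      | exact Pi.single_eq_of_ne (by omega : n ≠ 0) _
      | exact Pi.single_eq_of_ne' (by omega : (0 : ℤ) ≠ n) _
      | rw [Pi.single_apply, if_neg (by omega : n ≠ 0)]⟩

/-- The inner product on `H²`, linear in the FIRST argument (the paper's convention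
`⟨f, g⟩ = ∫ f ḡ`). -/
def ipH (f g : Hd) : ℂ := @inner ℂ Ltwo _ (g : Ltwo) (f : Ltwo)

/-- The inner product on `L²(𝕋)`, linear in the FIRST argument. -/
def ipL (f g : Ltwo) : ℂ := @inner ℂ Ltwo _ g f

/-- `θ ∈ H²` is an inner function if `|θ(z)| = 1` a.e. on `𝕋`. -/
def IsInnerFn (θ : Hd) : Prop := ∀ᵐ x ∂muc, ‖((θ : Ltwo) : Tc → ℂ) x‖ = 1

/-- The set `θ·H² ⊆ L²(𝕋)` of pointwise a.e. products `θ·f`, `f ∈ H²`. -/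
def thetaHardy (θ : Hd) : Set Ltwo :=
  {g : Ltwo | ∃ f : Hd, (g : Tc → ℂ) =ᵐ[muc]
    fun x => ((θ : Ltwo) : Tc → ℂ) x * ((f : Ltwo) : Tc → ℂ) x}

/-- The model space `K_θ = H² ∩ (θH²)^⊥`, as a subset of `L²(𝕋)`. -/
def KspaceL (θ : Hd) : Set Ltwo :=
  {h : Ltwo | h ∈ Hardy ∧ ∀ g ∈ thetaHardy θ, ipL h g = 0}

/-- The model space `K_θ`, as a subset of `H²`. -/
def Kspace (θ : Hd) : Set Hd := {h : Hd | (h : Ltwo) ∈ KspaceL θ}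

/-- `p` is an isometric multiplier on `K_θ`: `p` is measurable and, for every `h ∈ K_θ`,
the pointwise product `p·h` lies in `H²` and has the same norm as `h`. -/
def IsIsomMult (p : Tc → ℂ) (θ : Hd) : Prop :=
  Measurable p ∧ ∀ h ∈ Kspace θ, ∃ g : Hd,
    ((g : Ltwo) : Tc → ℂ) =ᵐ[muc] (fun x => p x * ((h : Ltwo) : Tc → ℂ) x) ∧
    ‖(g : Ltwo)‖ = ‖(h : Ltwo)‖

/-- The subspace `p·K_θ = {p·h : h ∈ K_θ}` of `H²`. -/
def wModel (p : Tc → ℂ) (θ : Hd) : Set Hd :=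
  {g : Hd | ∃ h ∈ Kspace θ, ((g : Ltwo) : Tc → ℂ) =ᵐ[muc]
    fun x => p x * ((h : Ltwo) : Tc → ℂ) x}

/-- A bounded Hankel operator on `H²`: a continuous antilinear map `H : H² → H²`
satisfying `S*H = HS`. -/
def IsHankelOp (H : Hd →L⋆[ℂ] Hd) : Prop := ∀ f : Hd, SstarOp (H f) = H (Sop f)

/-- A bounded measurable symbol on the circle (an `L^∞` function). -/
def IsBddFn (u : Tc → ℂ) : Prop := Measurable u ∧ ∃ C : ℝ, ∀ᵐ x ∂muc, ‖u x‖ ≤ C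

theorem memLp_mul_conj {u : Tc → ℂ} (hu : IsBddFn u) (f : Ltwo) :
    MemLp (fun x => u x * (starRingEnd ℂ) ((f : Tc → ℂ) x)) 2 muc := by
  obtain ⟨hmeas, C, hC⟩ := hu
  refine MemLp.of_le_mul (c := C) (Lp.memLp f)
    (hmeas.aestronglyMeasurable.mul
      (continuous_star.comp_aestronglyMeasurable (Lp.aestronglyMeasurable f))) ?_
  filter_upwards [hC] with x hx
  rw [norm_mul, RCLike.norm_conj]
  exact mul_le_mul_of_nonneg_right hx (norm_nonneg _)

/-- The Hankel operator with symbol `u`: `H_u f = P(u·f̄)`, defined on all of `L²(𝕋)`. -/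
def hankelL (u : Tc → ℂ) (hu : IsBddFn u) : Ltwo → Ltwo :=
  fun f => PL ((memLp_mul_conj hu f).toLp _)

/-- The Möbius transformation `μ(z) = (α − z)/(1 − ᾱz)` of the unit disk. -/
def mobius (α z : ℂ) : ℂ := (α - z) / (1 - (starRingEnd ℂ) α * z)

/-- The point `e^{ix} ∈ ℂ` corresponding to `x ∈ 𝕋`. -/
def circlePt (x : Tc) : ℂ := fourier 1 x

/-- The Möbius transformation `μ` viewed as a self-map of `𝕋`. -/
def mobiusT (α : ℂ) (x : Tc) : Tc := ((Complex.arg (mobius α (circlePt x)) : ℝ) : Tc)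

/-- The weight `√(1 − |α|²)/(1 − ᾱz)` in the definition of `U_μ`. -/
def umuWeight (α : ℂ) (x : Tc) : ℂ :=
  (Real.sqrt (1 - ‖α‖ ^ 2) : ℂ) / (1 - (starRingEnd ℂ) α * circlePt x)

/-- `U` is the operator `U_μ`: `(U_μ f)(z) = (√(1 − |α|²)/(1 − ᾱz))·f(μ(z))` a.e. -/
def IsUmu (α : ℂ) (U : Ltwo → Ltwo) : Prop :=
  ∀ f : Ltwo, ((U f : Ltwo) : Tc → ℂ) =ᵐ[muc]
    fun x => umuWeight α x * (f : Tc → ℂ) (mobiusT α x)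

/-!
A Hankel operator is symmetric in the sense that `⟨f, Hg⟩ = ⟨g, Hf⟩`: by `S*H = HS`, on monomials
`⟨zᵐ, H zⁿ⟩ = ⟨z^{m+n}, H𝟙⟩` depends only on `m + n`, and both sides are continuous and antilinear
in each variable, while the monomials span a dense subspace of `H²`. The Schmidt subspace `E_H(s)`
is invariant under `H`, so for `f ∈ E_H(s)` the hypothesis gives
`0 = ⟨Hf, H𝟙⟩ = ⟨𝟙, H(Hf)⟩ = s²⟨𝟙, f⟩`.
-/

open scoped InnerProductSpace

theorem ipH_eq_inner (f g : Hd) : ipH f g = ⟪g, f⟫_ℂ := rfl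

theorem inner_mulF_neg_one_right (a b : Ltwo) : ⟪a, mulF (-1) b⟫_ℂ = ⟪mulF 1 a, b⟫_ℂ := by
  rw [L2.inner_def, L2.inner_def]
  refine integral_congr_ae ?_
  filter_upwards [mulF_coe (-1) b, mulF_coe 1 a] with x hb ha
  rw [hb, ha, fourier_neg]
  simp only [RCLike.inner_apply, map_mul]
  ring

theorem inner_SstarOp_right (g h : Hd) : ⟪g, SstarOp h⟫_ℂ = ⟪Sop g, h⟫_ℂ := by
  rw [SstarOp, P2, Submodule.inner_orthogonalProjectionOnto_eq_of_mem_left]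
  exact inner_mulF_neg_one_right _ _

theorem inner_hankel_Sop_iterate {H : Hd →L⋆[ℂ] Hd} (hH : IsHankelOp H) (m : ℕ) (f g : Hd) :
    ⟪g, H (Sop^[m] f)⟫_ℂ = ⟪Sop^[m] g, H f⟫_ℂ := by
  induction m generalizing f g with
  | zero => rfl
  | succ n ih =>
    rw [Function.iterate_succ_apply, ih, ← hH, inner_SstarOp_right,
      ← Function.iterate_succ_apply' Sop]

theorem mulF_one_fourierLp (n : ℤ) : mulF 1 (fourierLp 2 n) = fourierLp 2 (n + 1) := by
  refine Lp.ext ?_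
  filter_upwards [mulF_coe 1 (fourierLp 2 n), coeFn_fourierLp (T := 2 * Real.pi) 2 n,
    coeFn_fourierLp (T := 2 * Real.pi) 2 (n + 1)] with x h1 h2 h3
  rw [h1, h2, h3, ← fourier_add, add_comm]

theorem coe_Sop_iterate_oneH (m : ℕ) : ((Sop^[m] oneH : Hd) : Ltwo) = fourierLp 2 (m : ℤ) := by
  induction m with
  | zero => rfl
  | succ n ih =>
    rw [Function.iterate_succ_apply']
    change mulF 1 ((Sop^[n] oneH : Hd) : Ltwo) = _
    rw [ih, mulF_one_fourierLp, Nat.cast_succ]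

theorem dense_span_Sop_iterate_oneH :
    Dense (Submodule.span ℂ (Set.range fun m : ℕ => Sop^[m] oneH) : Set Hd) := by
  rw [Submodule.dense_iff_topologicalClosure_eq_top, Submodule.topologicalClosure_eq_top_iff,
    Submodule.eq_bot_iff]
  intro w hw
  have hrepr : fourierBasis.repr (w : Ltwo) = 0 := by
    ext n
    rcases lt_or_ge n 0 with hn | hn
    · exact w.2 n hn
    · lift n to ℕ using hn
      rw [HilbertBasis.repr_apply_apply, coe_fourierBasis, ← coe_Sop_iterate_oneH,
        ← Submodule.coe_inner]
      exact hw _ (Submodule.subset_span ⟨n, rfl⟩)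
  exact Subtype.ext (fourierBasis.repr.map_eq_zero_iff.mp hrepr)

theorem ext_on_Sop_iterate_oneH {σ : ℂ →+* ℂ} {F G : Hd →SL[σ] ℂ}
    (h : ∀ m : ℕ, F (Sop^[m] oneH) = G (Sop^[m] oneH)) : F = G :=
  ContinuousLinearMap.ext_on dense_span_Sop_iterate_oneH (by rintro _ ⟨m, rfl⟩; exact h m)

theorem inner_hankel_comm {H : Hd →L⋆[ℂ] Hd} (hH : IsHankelOp H) (f g : Hd) :
    ⟪f, H g⟫_ℂ = ⟪g, H f⟫_ℂ := by
  have monomials (m n : ℕ) :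
      ⟪Sop^[m] oneH, H (Sop^[n] oneH)⟫_ℂ = ⟪Sop^[n] oneH, H (Sop^[m] oneH)⟫_ℂ := by
    rw [inner_hankel_Sop_iterate hH, inner_hankel_Sop_iterate hH, ← Function.iterate_add_apply,
      ← Function.iterate_add_apply, add_comm]
  have monomial_left (m : ℕ) (g : Hd) :
      ⟪Sop^[m] oneH, H g⟫_ℂ = ⟪g, H (Sop^[m] oneH)⟫_ℂ :=
    DFunLike.congr_fun (ext_on_Sop_iterate_oneH (F := (innerSL ℂ (Sop^[m] oneH)).comp H)
      (G := innerSLFlip ℂ (H (Sop^[m] oneH))) (monomials m)) g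
  exact DFunLike.congr_fun (ext_on_Sop_iterate_oneH (F := innerSLFlip ℂ (H g))
    (G := (innerSL ℂ g).comp H) fun m => monomial_left m g) f

/-- If `u = H𝟙` is orthogonal to the Schmidt subspace `E_H(s)`, then so is `𝟙`. -/
theorem one_perp_schmidt_of_symbol_perp
    (H : Hd →L⋆[ℂ] Hd) (hH : IsHankelOp H) (s : ℝ) (hs : 0 < s)
    (hu : ∀ f : Hd, H (H f) = ((s : ℂ) ^ 2) • f → ipH f (H oneH) = 0) :
    ∀ f : Hd, H (H f) = ((s : ℂ) ^ 2) • f → ipH f oneH = 0 := by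
  intro f hf
  have hHf : H (H (H f)) = ((s : ℂ) ^ 2) • H f := by
    rw [hf, ContinuousLinearMap.map_smulₛₗ, map_pow, conj_ofReal]
  have h0 : ⟪H f, H oneH⟫_ℂ = 0 := inner_eq_zero_symm.mp (hu (H f) hHf)
  have h : ⟪H f, H oneH⟫_ℂ = (s : ℂ) ^ 2 * ⟪oneH, f⟫_ℂ := by
    rw [inner_hankel_comm hH, hf]
    exact inner_smul_right (𝕜 := ℂ) oneH f _
  have hs2 : (s : ℂ) ^ 2 ≠ 0 := by exact_mod_cast (pow_pos hs 2).ne'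
  rw [ipH_eq_inner]
  exact (mul_eq_zero.mp (h ▸ h0)).resolve_left hs2

end HankelSchmidt
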